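/- arXiv:0902.4290 — 5 statements merged into one kernel-verified Lean document; each statement's English description precedes it below -/
import Mathlib

section
/- The function H₁(φ,u,v,w,J₁,J₂,τ) = w − ((α₂−α₁)/h(τ))·v − (α₁α₂/(2 h(τ)²))·u² is a first integral of the limiting fast system φ' = u/h(τ), u' = v, v' = u·w, w' = (α₁α₂/h(τ)²)·u·v + ((α₂−α₁)/h(τ))·u·w, J₁' = 0, J₂' = 0, τ' = 0; i.e., along any C¹ solution of this ODE system the value of H₁ is constant. -/
/-! Since `τ' = 0`, the coefficient `h(τ)` is a constant `c`, and the system becomes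
`u' = v`, `v' = u w`, `w' = b u v + a u w` with `a = (α₂ - α₁)/c`, `b = α₁α₂/c²`.
Differentiating `w - a v - (b/2) u²` along it gives `b u v + a u w - a u w - b u v = 0`. -/

theorem eq_of_forall_hasDerivAt_zero {E : Type*} [NormedAddCommGroup E] [NormedSpace ℝ E]
    {f : ℝ → E} (hf : ∀ x, HasDerivAt f 0 x) (x y : ℝ) :
    f x = f y :=
  is_const_of_deriv_eq_zero (fun x => (hf x).differentiableAt) (fun x => (hf x).deriv) x y

theorem sub_sub_half_mul_sq_eq_of_hasDerivAt {a b : ℝ} {u v w : ℝ → ℝ}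
    (hu : ∀ ξ, HasDerivAt u (v ξ) ξ)
    (hv : ∀ ξ, HasDerivAt v (u ξ * w ξ) ξ)
    (hw : ∀ ξ, HasDerivAt w (b * (u ξ * v ξ) + a * (u ξ * w ξ)) ξ) (ξ₁ ξ₂ : ℝ) :
    w ξ₁ - a * v ξ₁ - b / 2 * u ξ₁ ^ 2 = w ξ₂ - a * v ξ₂ - b / 2 * u ξ₂ ^ 2 := by
  have hH : ∀ ξ, HasDerivAt (fun ξ => w ξ - a * v ξ - b / 2 * u ξ ^ 2) 0 ξ := fun ξ =>
    (((hw ξ).sub ((hv ξ).const_mul a)).sub (((hu ξ).pow 2).const_mul (b / 2))).congr_deriv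
      (by ring)
  exact eq_of_forall_hasDerivAt_zero hH ξ₁ ξ₂

theorem stmt_2_general (α₁ α₂ : ℝ)
    (h : ℝ → ℝ)
    (u v w τ : ℝ → ℝ)
    (hu : ∀ ξ, HasDerivAt u (v ξ) ξ)
    (hv : ∀ ξ, HasDerivAt v (u ξ * w ξ) ξ)
    (hw : ∀ ξ, HasDerivAt w
      (α₁ * α₂ / (h (τ ξ)) ^ 2 * (u ξ * v ξ)
        + (α₂ - α₁) / h (τ ξ) * (u ξ * w ξ)) ξ)
    (hτ : ∀ ξ, HasDerivAt τ 0 ξ) :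
    ∀ ξ₁ ξ₂ : ℝ,
      w ξ₁ - (α₂ - α₁) / h (τ ξ₁) * v ξ₁
          - α₁ * α₂ / (2 * (h (τ ξ₁)) ^ 2) * (u ξ₁) ^ 2
        = w ξ₂ - (α₂ - α₁) / h (τ ξ₂) * v ξ₂
          - α₁ * α₂ / (2 * (h (τ ξ₂)) ^ 2) * (u ξ₂) ^ 2 := by
  have hτ_const : ∀ ξ, τ ξ = τ 0 := fun ξ => eq_of_forall_hasDerivAt_zero hτ ξ 0
  simp only [hτ_const] at hw ⊢
  simp only [mul_comm (2 : ℝ), ← div_div]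
  exact sub_sub_half_mul_sq_eq_of_hasDerivAt hu hv hw

/-- H₁ is a first integral of the limiting fast PNP system. -/
theorem stmt_2 (α₁ α₂ : ℝ) (hα₁ : 0 < α₁) (hα₂ : 0 < α₂)
    (h : ℝ → ℝ) (hh : ContDiff ℝ 1 h) (hhpos : ∀ t, 0 < h t)
    (φ u v w J₁ J₂ τ : ℝ → ℝ)
    (hφ : ∀ ξ, HasDerivAt φ (u ξ / h (τ ξ)) ξ)
    (hu : ∀ ξ, HasDerivAt u (v ξ) ξ)
    (hv : ∀ ξ, HasDerivAt v (u ξ * w ξ) ξ)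
    (hw : ∀ ξ, HasDerivAt w
      (α₁ * α₂ / (h (τ ξ)) ^ 2 * (u ξ * v ξ)
        + (α₂ - α₁) / h (τ ξ) * (u ξ * w ξ)) ξ)
    (hJ₁ : ∀ ξ, HasDerivAt J₁ 0 ξ)
    (hJ₂ : ∀ ξ, HasDerivAt J₂ 0 ξ)
    (hτ : ∀ ξ, HasDerivAt τ 0 ξ) :
    ∀ ξ₁ ξ₂ : ℝ,
      w ξ₁ - (α₂ - α₁) / h (τ ξ₁) * v ξ₁
          - α₁ * α₂ / (2 * (h (τ ξ₁)) ^ 2) * (u ξ₁) ^ 2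
        = w ξ₂ - (α₂ - α₁) / h (τ ξ₂) * v ξ₂
          - α₁ * α₂ / (2 * (h (τ ξ₂)) ^ 2) * (u ξ₂) ^ 2 :=
  stmt_2_general α₁ α₂ h u v w τ hu hv hw hτ
end

section
/- The function H₂(φ,u,v,w,J₁,J₂,τ) = φ − (1/α₂)·log|α₁ v / h(τ) + w| is a first integral of the limiting fast system φ' = u/h(τ), u' = v, v' = u·w, w' = (α₁α₂/h(τ)²)·u·v + ((α₂−α₁)/h(τ))·u·w, J₁' = 0, J₂' = 0, τ' = 0, on the region where α₁ v / h(τ) + w ≠ 0. -/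
/-! Since `τ' = 0`, the coefficient `c = h(τ)` is constant along the solution. Then
`F = α₁ v / c + w` satisfies the linear equation `F' = α₂ (u / c) F`, while `φ' = u / c`;
hence `(log |F|)' = α₂ φ'` and `φ - α₂⁻¹ log |F|` is constant. -/

open Real

theorem sub_one_div_mul_log_abs_eq_of_hasDerivAt {a : ℝ} (ha : a ≠ 0) {φ p F : ℝ → ℝ}
    (hφ : ∀ x, HasDerivAt φ (p x) x) (hF : ∀ x, HasDerivAt F (a * p x * F x) x)
    (hF₀ : ∀ x, F x ≠ 0) (x y : ℝ) :
    φ x - 1 / a * log |F x| = φ y - 1 / a * log |F y| := by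
  have hderiv : ∀ z, HasDerivAt (fun z => φ z - 1 / a * log |F z|) 0 z := by
    intro z
    simp_rw [log_abs]
    refine ((hφ z).sub (((hF z).log (hF₀ z)).const_mul (1 / a))).congr_deriv ?_
    field_simp [hF₀ z]
    ring
  exact is_const_of_deriv_eq_zero (fun z => (hderiv z).differentiableAt)
    (fun z => (hderiv z).deriv) x y

theorem hasDerivAt_mul_div_add_of_fast_system {α₁ α₂ c : ℝ} (hc : c ≠ 0) {u v w : ℝ → ℝ}
    {x : ℝ} (hv : HasDerivAt v (u x * w x) x)
    (hw : HasDerivAt w (α₁ * α₂ / c ^ 2 * (u x * v x) + (α₂ - α₁) / c * (u x * w x)) x) :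
    HasDerivAt (fun x => α₁ * v x / c + w x) (α₂ * (u x / c) * (α₁ * v x / c + w x)) x := by
  refine (((hv.const_mul α₁).div_const c).add hw).congr_deriv ?_
  field_simp
  ring

theorem stmt_3_general (α₁ α₂ : ℝ) (hα₂ : 0 < α₂)
    (h : ℝ → ℝ) (hhpos : ∀ t, 0 < h t)
    (φ u v w τ : ℝ → ℝ)
    (hφ : ∀ ξ, HasDerivAt φ (u ξ / h (τ ξ)) ξ)
    (hv : ∀ ξ, HasDerivAt v (u ξ * w ξ) ξ)
    (hw : ∀ ξ, HasDerivAt w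
      (α₁ * α₂ / (h (τ ξ)) ^ 2 * (u ξ * v ξ)
        + (α₂ - α₁) / h (τ ξ) * (u ξ * w ξ)) ξ)
    (hτ : ∀ ξ, HasDerivAt τ 0 ξ)
    (hne : ∀ ξ, α₁ * v ξ / h (τ ξ) + w ξ ≠ 0) :
    ∀ ξ₁ ξ₂ : ℝ,
      φ ξ₁ - (1 / α₂) * Real.log |α₁ * v ξ₁ / h (τ ξ₁) + w ξ₁|
        = φ ξ₂ - (1 / α₂) * Real.log |α₁ * v ξ₂ / h (τ ξ₂) + w ξ₂| := by
  have hτ_const : ∀ ξ, τ ξ = τ 0 := fun ξ =>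
    is_const_of_deriv_eq_zero (fun x => (hτ x).differentiableAt) (fun x => (hτ x).deriv) ξ 0
  simp_rw [hτ_const] at hφ hw hne ⊢
  exact sub_one_div_mul_log_abs_eq_of_hasDerivAt hα₂.ne' hφ
    (fun ξ => hasDerivAt_mul_div_add_of_fast_system (hhpos _).ne' (hv ξ) (hw ξ)) hne

/-- H₂ is a first integral of the limiting fast PNP system. -/
theorem stmt_3 (α₁ α₂ : ℝ) (hα₁ : 0 < α₁) (hα₂ : 0 < α₂)
    (h : ℝ → ℝ) (hh : ContDiff ℝ 1 h) (hhpos : ∀ t, 0 < h t)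
    (φ u v w J₁ J₂ τ : ℝ → ℝ)
    (hφ : ∀ ξ, HasDerivAt φ (u ξ / h (τ ξ)) ξ)
    (hu : ∀ ξ, HasDerivAt u (v ξ) ξ)
    (hv : ∀ ξ, HasDerivAt v (u ξ * w ξ) ξ)
    (hw : ∀ ξ, HasDerivAt w
      (α₁ * α₂ / (h (τ ξ)) ^ 2 * (u ξ * v ξ)
        + (α₂ - α₁) / h (τ ξ) * (u ξ * w ξ)) ξ)
    (hJ₁ : ∀ ξ, HasDerivAt J₁ 0 ξ)
    (hJ₂ : ∀ ξ, HasDerivAt J₂ 0 ξ)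
    (hτ : ∀ ξ, HasDerivAt τ 0 ξ)
    (hne : ∀ ξ, α₁ * v ξ / h (τ ξ) + w ξ ≠ 0) :
    ∀ ξ₁ ξ₂ : ℝ,
      φ ξ₁ - (1 / α₂) * Real.log |α₁ * v ξ₁ / h (τ ξ₁) + w ξ₁|
        = φ ξ₂ - (1 / α₂) * Real.log |α₁ * v ξ₂ / h (τ ξ₂) + w ξ₂| :=
  stmt_3_general α₁ α₂ hα₂ h hhpos φ u v w τ hφ hv hw hτ hne
end

section
/- The function H₃(φ,u,v,w,J₁,J₂,τ) = φ + (1/α₁)·log|α₂ v / h(τ) − w| is a first integral of the limiting fast system φ' = u/h(τ), u' = v, v' = u·w, w' = (α₁α₂/h(τ)²)·u·v + ((α₂−α₁)/h(τ))·u·w, J₁' = 0, J₂' = 0, τ' = 0, on the region where α₂ v / h(τ) − w ≠ 0. -/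
/-!
Since `τ' = 0`, the coefficient `c = h(τ)` is constant along a solution. Then
`g = α₂ v / c - w` satisfies the linear equation `g' = -α₁ (u / c) g`, while `φ' = u / c`,
so `φ + (1/α₁) log |g|` has derivative zero.
-/

open Real

lemma add_one_div_mul_log_abs_eq_of_hasDerivAt {φ g a : ℝ → ℝ} {k : ℝ} (hk : k ≠ 0)
    (hφ : ∀ ξ, HasDerivAt φ (a ξ) ξ) (hg : ∀ ξ, HasDerivAt g (-k * a ξ * g ξ) ξ)
    (hne : ∀ ξ, g ξ ≠ 0) (ξ₁ ξ₂ : ℝ) :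
    φ ξ₁ + (1 / k) * log |g ξ₁| = φ ξ₂ + (1 / k) * log |g ξ₂| := by
  have hderiv : ∀ ξ, HasDerivAt (fun ξ => φ ξ + (1 / k) * log |g ξ|) 0 ξ := fun ξ => by
    simp only [log_abs]
    refine ((hφ ξ).add (((hg ξ).log (hne ξ)).const_mul (1 / k))).congr_deriv ?_
    field_simp [hne ξ]
    ring
  exact is_const_of_deriv_eq_zero (fun ξ => (hderiv ξ).differentiableAt)
    (fun ξ => (hderiv ξ).deriv) ξ₁ ξ₂

lemma hasDerivAt_mul_div_sub {α₁ α₂ c ξ : ℝ} {u v w : ℝ → ℝ}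
    (hv : HasDerivAt v (u ξ * w ξ) ξ)
    (hw : HasDerivAt w (α₁ * α₂ / c ^ 2 * (u ξ * v ξ) + (α₂ - α₁) / c * (u ξ * w ξ)) ξ) :
    HasDerivAt (fun ξ => α₂ * v ξ / c - w ξ) (-α₁ * (u ξ / c) * (α₂ * v ξ / c - w ξ)) ξ := by
  refine (((hv.const_mul α₂).div_const c).sub hw).congr_deriv ?_
  ring

theorem stmt_4_general (α₁ α₂ : ℝ) (hα₁ : 0 < α₁)
    (h : ℝ → ℝ)
    (φ u v w τ : ℝ → ℝ)
    (hφ : ∀ ξ, HasDerivAt φ (u ξ / h (τ ξ)) ξ)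
    (hv : ∀ ξ, HasDerivAt v (u ξ * w ξ) ξ)
    (hw : ∀ ξ, HasDerivAt w
      (α₁ * α₂ / (h (τ ξ)) ^ 2 * (u ξ * v ξ)
        + (α₂ - α₁) / h (τ ξ) * (u ξ * w ξ)) ξ)
    (hτ : ∀ ξ, HasDerivAt τ 0 ξ)
    (hne : ∀ ξ, α₂ * v ξ / h (τ ξ) - w ξ ≠ 0) :
    ∀ ξ₁ ξ₂ : ℝ,
      φ ξ₁ + (1 / α₁) * Real.log |α₂ * v ξ₁ / h (τ ξ₁) - w ξ₁|
        = φ ξ₂ + (1 / α₁) * Real.log |α₂ * v ξ₂ / h (τ ξ₂) - w ξ₂| := by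
  obtain ⟨c, hc⟩ : ∃ c, ∀ ξ, h (τ ξ) = c := ⟨h (τ 0), fun ξ => by
    rw [is_const_of_deriv_eq_zero (fun ξ => (hτ ξ).differentiableAt) (fun ξ => (hτ ξ).deriv) ξ 0]⟩
  simp only [hc] at hφ hw hne ⊢
  exact add_one_div_mul_log_abs_eq_of_hasDerivAt hα₁.ne' hφ
    (fun ξ => hasDerivAt_mul_div_sub (hv ξ) (hw ξ)) hne

/-- H₃ is a first integral of the limiting fast PNP system. -/
theorem stmt_4 (α₁ α₂ : ℝ) (hα₁ : 0 < α₁) (hα₂ : 0 < α₂)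
    (h : ℝ → ℝ) (hh : ContDiff ℝ 1 h) (hhpos : ∀ t, 0 < h t)
    (φ u v w J₁ J₂ τ : ℝ → ℝ)
    (hφ : ∀ ξ, HasDerivAt φ (u ξ / h (τ ξ)) ξ)
    (hu : ∀ ξ, HasDerivAt u (v ξ) ξ)
    (hv : ∀ ξ, HasDerivAt v (u ξ * w ξ) ξ)
    (hw : ∀ ξ, HasDerivAt w
      (α₁ * α₂ / (h (τ ξ)) ^ 2 * (u ξ * v ξ)
        + (α₂ - α₁) / h (τ ξ) * (u ξ * w ξ)) ξ)
    (hJ₁ : ∀ ξ, HasDerivAt J₁ 0 ξ)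
    (hJ₂ : ∀ ξ, HasDerivAt J₂ 0 ξ)
    (hτ : ∀ ξ, HasDerivAt τ 0 ξ)
    (hne : ∀ ξ, α₂ * v ξ / h (τ ξ) - w ξ ≠ 0) :
    ∀ ξ₁ ξ₂ : ℝ,
      φ ξ₁ + (1 / α₁) * Real.log |α₂ * v ξ₁ / h (τ ξ₁) - w ξ₁|
        = φ ξ₂ + (1 / α₁) * Real.log |α₂ * v ξ₂ / h (τ ξ₂) - w ξ₂| :=
  stmt_4_general α₁ α₂ hα₁ h φ u v w τ hφ hv hw hτ hne
end

section
/- Suppose a C¹ solution (φ, u, v, w) of the limiting fast system with parameters fixed at τ ≡ 0 satisfies the initial conditions φ(0) = φ₀, v(0) = h(0)(α₂ l₂ − α₁ l₁), w(0) = α₁² l₁ + α₂² l₂, and converges as ξ → +∞ to an equilibrium (φ*, 0, 0, w*). Then w* = (α₁+α₂)(α₁ l₁)^{α₂/(α₁+α₂)} (α₂ l₂)^{α₁/(α₁+α₂)} and φ* = φ₀ + (1/(α₁+α₂)) log(α₁ l₁ / (α₂ l₂)). -/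
/-!
Both `P = α₁ v / h₀ + w` and `Q = w - α₂ v / h₀` solve scalar linear equations driven by
`φ' = u / h₀`, namely `P' = α₂ φ' P` and `Q' = -α₁ φ' Q`, so `P e^{-α₂ φ}` and `Q e^{α₁ φ}`
are first integrals (the invariants `H₂`, `H₃`). Along the orbit `P` and `Q` both tend to
`w*`, which gives `w* = P(0) e^{α₂ (φ* - φ₀)} = Q(0) e^{-α₁ (φ* - φ₀)}`; these two equations
determine `φ* - φ₀` and `w*`.
-/

open Filter Topology Real

section LinearScalarODE

variable {A a P : ℝ → ℝ}

theorem eq_mul_exp_sub_of_hasDerivAt (hA : ∀ x, HasDerivAt A (a x) x)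
    (hP : ∀ x, HasDerivAt P (a x * P x) x) (x y : ℝ) :
    P x = P y * exp (A x - A y) := by
  have hF : ∀ x, HasDerivAt (fun x => P x * exp (-A x)) 0 x := fun x =>
    ((hP x).mul (hA x).neg.exp).congr_deriv (by ring)
  have hconst := is_const_of_deriv_eq_zero (fun x => (hF x).differentiableAt)
    (fun x => (hF x).deriv) x y
  calc P x = P x * exp (-A x) * exp (A x) := by
        rw [mul_assoc, ← exp_add, neg_add_cancel, exp_zero, mul_one]
    _ = P y * exp (A x - A y) := by rw [hconst, mul_assoc, ← exp_add, neg_add_eq_sub]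

theorem eq_mul_exp_sub_of_tendsto_of_hasDerivAt (hA : ∀ x, HasDerivAt A (a x) x)
    (hP : ∀ x, HasDerivAt P (a x * P x) x) {c L : ℝ} (hAlim : Tendsto A atTop (𝓝 c))
    (hPlim : Tendsto P atTop (𝓝 L)) (y : ℝ) :
    L = P y * exp (c - A y) := by
  refine tendsto_nhds_unique hPlim
    (Tendsto.congr (fun x => (eq_mul_exp_sub_of_hasDerivAt hA hP x y).symm) ?_)
  exact ((continuous_exp.tendsto _).comp (hAlim.sub_const _)).const_mul _

end LinearScalarODE

theorem eq_log_div_and_eq_rpow_mul_rpow {a b p q t w : ℝ} (hab : a + b ≠ 0) (hp : 0 < p)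
    (hq : 0 < q) (hwp : w = p * exp (b * t)) (hwq : w = q * exp (-a * t)) :
    t = log (q / p) / (a + b) ∧ w = p ^ (a / (a + b)) * q ^ (b / (a + b)) := by
  have hexp : exp ((a + b) * t) = q / p := by
    rw [eq_div_iff hp.ne']
    calc exp ((a + b) * t) * p = p * exp (b * t) * exp (a * t) := by
          rw [mul_assoc, ← exp_add]; ring_nf
      _ = q * exp (-a * t) * exp (a * t) := by rw [← hwp, hwq]
      _ = q := by rw [mul_assoc, ← exp_add, neg_mul, neg_add_cancel, exp_zero, mul_one]
  have ht : t = log (q / p) / (a + b) := by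
    rw [← hexp, log_exp]; field_simp
  refine ⟨ht, ?_⟩
  have hexponent : a / (a + b) = 1 - b / (a + b) := by field_simp; ring
  rw [hwp, ht, hexponent, rpow_sub hp, rpow_one, ← mul_div_right_comm, mul_div_assoc,
    ← div_rpow hq.le hp.le, rpow_def_of_pos (div_pos hq hp)]
  ring_nf

theorem mul_rpow_mul_mul_rpow {a b c x y : ℝ} (hab : 0 < a + b) (hc : 0 < c) (hx : 0 ≤ x)
    (hy : 0 ≤ y) :
    (c * x) ^ (a / (a + b)) * (c * y) ^ (b / (a + b)) =
      c * x ^ (a / (a + b)) * y ^ (b / (a + b)) := by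
  have hcc : c ^ (a / (a + b)) * c ^ (b / (a + b)) = c := by
    rw [← rpow_add hc, ← add_div, div_self hab.ne', rpow_one]
  rw [mul_rpow hc.le hx, mul_rpow hc.le hy]
  linear_combination x ^ (a / (a + b)) * y ^ (b / (a + b)) * hcc

theorem stmt_7_general (α₁ α₂ l₁ l₂ φ₀ h₀ φstar wstar : ℝ)
    (hα₁ : 0 < α₁) (hα₂ : 0 < α₂) (hl₁ : 0 < l₁) (hl₂ : 0 < l₂)
    (hh₀ : 0 < h₀)
    (φ u v w : ℝ → ℝ)
    (hφ : ∀ ξ, HasDerivAt φ (u ξ / h₀) ξ)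
    (hv : ∀ ξ, HasDerivAt v (u ξ * w ξ) ξ)
    (hw : ∀ ξ, HasDerivAt w
      (α₁ * α₂ / h₀ ^ 2 * (u ξ * v ξ) + (α₂ - α₁) / h₀ * (u ξ * w ξ)) ξ)
    (hφ0 : φ 0 = φ₀)
    (hv0 : v 0 = h₀ * (α₂ * l₂ - α₁ * l₁))
    (hw0 : w 0 = α₁ ^ 2 * l₁ + α₂ ^ 2 * l₂)
    (hφlim : Tendsto φ atTop (nhds φstar))
    (hvlim : Tendsto v atTop (nhds 0))
    (hwlim : Tendsto w atTop (nhds wstar)) :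
    wstar = (α₁ + α₂) * (α₁ * l₁) ^ (α₂ / (α₁ + α₂)) * (α₂ * l₂) ^ (α₁ / (α₁ + α₂)) ∧
    φstar = φ₀ + (1 / (α₁ + α₂)) * Real.log (α₁ * l₁ / (α₂ * l₂)) := by
  have hs : 0 < α₁ + α₂ := add_pos hα₁ hα₂
  have hP : ∀ ξ, HasDerivAt (fun ξ => α₁ * v ξ / h₀ + w ξ)
      (α₂ * (u ξ / h₀) * (α₁ * v ξ / h₀ + w ξ)) ξ := fun ξ =>
    ((((hv ξ).const_mul α₁).div_const h₀).add (hw ξ)).congr_deriv (by field_simp; ring)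
  have hQ : ∀ ξ, HasDerivAt (fun ξ => w ξ - α₂ * v ξ / h₀)
      (-α₁ * (u ξ / h₀) * (w ξ - α₂ * v ξ / h₀)) ξ := fun ξ =>
    ((hw ξ).sub (((hv ξ).const_mul α₂).div_const h₀)).congr_deriv (by field_simp; ring)
  have hPlim : Tendsto (fun ξ => α₁ * v ξ / h₀ + w ξ) atTop (𝓝 wstar) := by
    simpa using ((hvlim.const_mul α₁).div_const h₀).add hwlim
  have hQlim : Tendsto (fun ξ => w ξ - α₂ * v ξ / h₀) atTop (𝓝 wstar) := by
    simpa using hwlim.sub ((hvlim.const_mul α₂).div_const h₀)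
  have hP0 : α₁ * v 0 / h₀ + w 0 = (α₁ + α₂) * (α₂ * l₂) := by
    rw [hv0, hw0]; field_simp; ring
  have hQ0 : w 0 - α₂ * v 0 / h₀ = (α₁ + α₂) * (α₁ * l₁) := by
    rw [hv0, hw0]; field_simp; ring
  have hwP := eq_mul_exp_sub_of_tendsto_of_hasDerivAt (fun ξ => (hφ ξ).const_mul α₂) hP
    (hφlim.const_mul α₂) hPlim 0
  have hwQ := eq_mul_exp_sub_of_tendsto_of_hasDerivAt (fun ξ => (hφ ξ).const_mul (-α₁)) hQ
    (hφlim.const_mul (-α₁)) hQlim 0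
  rw [hP0, hφ0, ← mul_sub] at hwP
  rw [hQ0, hφ0, ← mul_sub] at hwQ
  obtain ⟨hφstar, hwstar⟩ :=
    eq_log_div_and_eq_rpow_mul_rpow hs.ne' (by positivity) (by positivity) hwP hwQ
  rw [mul_div_mul_left _ _ hs.ne'] at hφstar
  rw [mul_rpow_mul_mul_rpow hs hs (by positivity) (by positivity)] at hwstar
  exact ⟨by rw [hwstar]; ring, by rw [one_div_mul_eq_div, ← hφstar]; ring⟩

/-- Limit of a left boundary-layer orbit of the limiting fast system (τ ≡ 0). -/
theorem stmt_7 (α₁ α₂ l₁ l₂ φ₀ h₀ φstar wstar : ℝ)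
    (hα₁ : 0 < α₁) (hα₂ : 0 < α₂) (hl₁ : 0 < l₁) (hl₂ : 0 < l₂)
    (hh₀ : 0 < h₀)
    (φ u v w : ℝ → ℝ)
    (hφ : ∀ ξ, HasDerivAt φ (u ξ / h₀) ξ)
    (hu : ∀ ξ, HasDerivAt u (v ξ) ξ)
    (hv : ∀ ξ, HasDerivAt v (u ξ * w ξ) ξ)
    (hw : ∀ ξ, HasDerivAt w
      (α₁ * α₂ / h₀ ^ 2 * (u ξ * v ξ) + (α₂ - α₁) / h₀ * (u ξ * w ξ)) ξ)
    (hφ0 : φ 0 = φ₀)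
    (hv0 : v 0 = h₀ * (α₂ * l₂ - α₁ * l₁))
    (hw0 : w 0 = α₁ ^ 2 * l₁ + α₂ ^ 2 * l₂)
    (hwpos : ∀ ξ, 0 < w ξ)
    (hpos1 : ∀ ξ, 0 < α₁ * v ξ / h₀ + w ξ)
    (hpos2 : ∀ ξ, 0 < w ξ - α₂ * v ξ / h₀)
    (hφlim : Tendsto φ atTop (nhds φstar))
    (hulim : Tendsto u atTop (nhds 0))
    (hvlim : Tendsto v atTop (nhds 0))
    (hwlim : Tendsto w atTop (nhds wstar)) :
    wstar = (α₁ + α₂) * (α₁ * l₁) ^ (α₂ / (α₁ + α₂)) * (α₂ * l₂) ^ (α₁ / (α₁ + α₂)) ∧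
    φstar = φ₀ + (1 / (α₁ + α₂)) * Real.log (α₁ * l₁ / (α₂ * l₂)) :=
  stmt_7_general α₁ α₂ l₁ l₂ φ₀ h₀ φstar wstar hα₁ hα₂ hl₁ hl₂ hh₀ φ u v w hφ hv hw hφ0 hv0 hw0
    hφlim hvlim hwlim
end

section
/- Let f : ℝⁿ → ℝⁿ be a C¹ vector field, ψ : ℝⁿ → ℝⁿ a C² diffeomorphism with Jacobian J(q) and d(q) = (det J(q))⁻¹, and suppose Σⱼ ∂/∂qⱼ ( d(q) ∂qⱼ/∂pᵢ ) = 0 for all i = 1,…,n. Define F(p) = f(ψ(p)). Then div_p F(p) = (1/d(q)) · div_q ( d(q) J(q) f(q) ) evaluated at q = ψ(p). -/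
/-!
By the chain rule, `div_p (f ∘ ψ) = tr (Df(q) · Dψ(p))`, and `Dψ(p) = J(q)` at `q = ψ p`.
By the Leibniz rule, `div_q (d J f) = ∑ᵢ fᵢ · ∑ⱼ ∂ⱼ(d Jⱼᵢ) + d · tr (J · Df)`; the first sum
vanishes by the divergence-free hypothesis, and `tr (J · Df) = tr (Df · J)`.
-/

open scoped BigOperators

/-- Divergence of a vector field on ℝⁿ (in coordinates). -/
noncomputable def divg {n : ℕ} (F : (Fin n → ℝ) → (Fin n → ℝ))
    (p : Fin n → ℝ) : ℝ :=
  ∑ i, fderiv ℝ F p (Pi.single i 1) i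

/-- Jacobian matrix J(q) = Dψ(ψ⁻¹(q)) in coordinates: J(q)ⱼᵢ = ∂qⱼ/∂pᵢ. -/
noncomputable def jacMat {n : ℕ} (ψ ψinv : (Fin n → ℝ) → (Fin n → ℝ))
    (q : Fin n → ℝ) : Matrix (Fin n) (Fin n) ℝ :=
  fun j i => fderiv ℝ ψ (ψinv q) (Pi.single i 1) j

open scoped Matrix

theorem Differentiable.matrix_det {𝕜 E ι : Type*} [NontriviallyNormedField 𝕜]
    [NormedAddCommGroup E] [NormedSpace 𝕜 E] [Fintype ι] [DecidableEq ι] {A : E → Matrix ι ι 𝕜}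
    (hA : ∀ i j, Differentiable 𝕜 fun x => A x i j) : Differentiable 𝕜 fun x => (A x).det := by
  simp only [Matrix.det_apply]
  fun_prop

theorem fderiv_apply_apply {ι E : Type*} [Fintype ι] [NormedAddCommGroup E] [NormedSpace ℝ E]
    {F : E → ι → ℝ} {x : E} (hF : DifferentiableAt ℝ F x) (v : E) (i : ι) :
    fderiv ℝ (fun y => F y i) x v = fderiv ℝ F x v i := by
  rw [fderiv_apply hF]
  rfl

section
variable {m n : ℕ}

noncomputable def fderivMatrix (F : (Fin n → ℝ) → Fin m → ℝ) (x : Fin n → ℝ) :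
    Matrix (Fin m) (Fin n) ℝ :=
  LinearMap.toMatrix' (fderiv ℝ F x : (Fin n → ℝ) →ₗ[ℝ] Fin m → ℝ)

theorem fderivMatrix_apply (F : (Fin n → ℝ) → Fin m → ℝ) (x : Fin n → ℝ) (i : Fin m)
    (j : Fin n) : fderivMatrix F x i j = fderiv ℝ F x (Pi.single j 1) i :=
  LinearMap.toMatrix'_apply _ _ _

theorem fderivMatrix_comp {k : ℕ} {f : (Fin m → ℝ) → Fin k → ℝ} {g : (Fin n → ℝ) → Fin m → ℝ}
    {x : Fin n → ℝ} (hf : DifferentiableAt ℝ f (g x)) (hg : DifferentiableAt ℝ g x) :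
    fderivMatrix (fun y => f (g y)) x = fderivMatrix f (g x) * fderivMatrix g x := by
  rw [fderivMatrix, fderiv_fun_comp x hf hg]
  exact LinearMap.toMatrix'_comp _ _

theorem divg_eq_trace (F : (Fin n → ℝ) → Fin n → ℝ) (x : Fin n → ℝ) :
    divg F x = (fderivMatrix F x).trace := by
  simp [divg, Matrix.trace, fderivMatrix_apply]

theorem divg_mulVec {A : (Fin n → ℝ) → Matrix (Fin n) (Fin n) ℝ} {f : (Fin n → ℝ) → Fin n → ℝ}
    {x : Fin n → ℝ} (hA : ∀ j i, DifferentiableAt ℝ (fun q => A q j i) x)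
    (hf : DifferentiableAt ℝ f x) :
    divg (fun q => A q *ᵥ f q) x =
      ∑ i, f x i * ∑ j, fderiv ℝ (fun q => A q j i) x (Pi.single j 1) +
        (A x * fderivMatrix f x).trace := by
  have hfi : ∀ i, DifferentiableAt ℝ (fun q => f q i) x := differentiableAt_pi.1 hf
  have hAf : DifferentiableAt ℝ (fun q => A q *ᵥ f q) x :=
    differentiableAt_pi.2 fun j => by simp only [Matrix.mulVec, dotProduct]; fun_prop
  have hleibniz : ∀ j, fderiv ℝ (fun q => A q *ᵥ f q) x (Pi.single j 1) j =
      ∑ i, (f x i * fderiv ℝ (fun q => A q j i) x (Pi.single j 1) +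
        A x j i * fderiv ℝ f x (Pi.single j 1) i) := by
    intro j
    rw [← fderiv_apply_apply hAf]
    simp only [Matrix.mulVec, dotProduct]
    rw [fderiv_fun_sum (fun i _ => (hA j i).fun_mul (hfi i)), _root_.sum_apply]
    refine Finset.sum_congr rfl fun i _ => ?_
    rw [fderiv_fun_mul (hA j i) (hfi i)]
    simp only [_root_.add_apply, _root_.smul_apply, smul_eq_mul, fderiv_apply_apply hf]
    ring
  simp only [divg, hleibniz, Finset.sum_add_distrib, Matrix.trace, Matrix.diag, Matrix.mul_apply,
    fderivMatrix_apply, Finset.mul_sum]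
  rw [Finset.sum_comm]

theorem jacMat_apply_self {ψ ψinv : (Fin n → ℝ) → Fin n → ℝ}
    (hleft : Function.LeftInverse ψinv ψ) (p : Fin n → ℝ) :
    jacMat ψ ψinv (ψ p) = fderivMatrix ψ p := by
  ext j i
  rw [jacMat, hleft p, fderivMatrix_apply]

theorem differentiable_jacMat_apply {ψ ψinv : (Fin n → ℝ) → Fin n → ℝ} (hψ : ContDiff ℝ 2 ψ)
    (hψinv : Differentiable ℝ ψinv) (j i : Fin n) :
    Differentiable ℝ fun q => jacMat ψ ψinv q j i := by
  have hDψ : Differentiable ℝ fun p => fderiv ℝ ψ p :=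
    (hψ.fderiv_right (m := 1) (by norm_num)).differentiable (by norm_num)
  exact differentiable_pi.1 ((hDψ.comp hψinv).clm_apply (differentiable_const _)) j

end

theorem stmt_18_general (n : ℕ)
    (ψ ψinv : (Fin n → ℝ) → (Fin n → ℝ))
    (hψ : ContDiff ℝ 2 ψ) (hψinv : ContDiff ℝ 2 ψinv)
    (hleft : Function.LeftInverse ψinv ψ)
    (f : (Fin n → ℝ) → (Fin n → ℝ)) (hf : ContDiff ℝ 1 f)
    (d : (Fin n → ℝ) → ℝ)
    (hd : ∀ q, d q = ((jacMat ψ ψinv q).det)⁻¹)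
    (hdne : ∀ q, (jacMat ψ ψinv q).det ≠ 0)
    (hdivfree : ∀ i (q : Fin n → ℝ),
      ∑ j, fderiv ℝ (fun q' => d q' * jacMat ψ ψinv q' j i) q (Pi.single j 1) = 0) :
    ∀ p, divg (fun p' => f (ψ p')) p =
      (d (ψ p))⁻¹ *
        divg (fun q i => d q * ((jacMat ψ ψinv q).mulVec (f q)) i) (ψ p) := by
  intro p
  have hf_diff : Differentiable ℝ f := hf.differentiable (by norm_num)
  have hJ := differentiable_jacMat_apply hψ (hψinv.differentiable (by norm_num))
  have hd_diff : Differentiable ℝ d := by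
    rw [funext hd]
    exact (Differentiable.matrix_det hJ).inv hdne
  have hd0 : d (ψ p) ≠ 0 := by
    rw [hd]
    exact inv_ne_zero (hdne _)
  have hfield : (fun q i => d q * (jacMat ψ ψinv q *ᵥ f q) i) =
      fun q => (d q • jacMat ψ ψinv q) *ᵥ f q := by
    simp only [Matrix.smul_mulVec]
    rfl
  rw [hfield, divg_mulVec (A := fun q => d q • jacMat ψ ψinv q)
      (fun j i => (hd_diff.fun_mul (hJ j i)) _) (hf_diff _),
    divg_eq_trace, fderivMatrix_comp (hf_diff _) (hψ.differentiable (by norm_num) p)]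
  simp only [Matrix.smul_apply, smul_eq_mul, hdivfree, mul_zero, Finset.sum_const_zero, zero_add,
    Matrix.smul_mul, Matrix.trace_smul, jacMat_apply_self hleft, inv_mul_cancel_left₀ hd0]
  exact Matrix.trace_mul_comm _ _

/-- Divergence transformation law of Lemma 2.1:
if the rows of d·J are divergence-free, then
div_p F(p) = (1/d(q)) div_q(d(q) J(q) f(q)) at q = ψ(p), where F = f ∘ ψ. -/
theorem stmt_18 (n : ℕ)
    (ψ ψinv : (Fin n → ℝ) → (Fin n → ℝ))
    (hψ : ContDiff ℝ 2 ψ) (hψinv : ContDiff ℝ 2 ψinv)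
    (hleft : Function.LeftInverse ψinv ψ)
    (hright : Function.RightInverse ψinv ψ)
    (f : (Fin n → ℝ) → (Fin n → ℝ)) (hf : ContDiff ℝ 1 f)
    (d : (Fin n → ℝ) → ℝ)
    (hd : ∀ q, d q = ((jacMat ψ ψinv q).det)⁻¹)
    (hdne : ∀ q, (jacMat ψ ψinv q).det ≠ 0)
    (hdivfree : ∀ i (q : Fin n → ℝ),
      ∑ j, fderiv ℝ (fun q' => d q' * jacMat ψ ψinv q' j i) q (Pi.single j 1) = 0) :
    ∀ p, divg (fun p' => f (ψ p')) p =
      (d (ψ p))⁻¹ *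
        divg (fun q i => d q * ((jacMat ψ ψinv q).mulVec (f q)) i) (ψ p) :=
  stmt_18_general n ψ ψinv hψ hψinv hleft f hf d hd hdne hdivfree
end
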